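/- arXiv:2406.00719 — 3 statements merged into one kernel-verified Lean document; each statement's English description precedes it below -/
import Mathlib

section
/- Let B00, C^1,...,C^d, B^{jk} (j,k=1..d) be real n×n matrices. Define B(ξ0,ξ) = ξ0² B00 + ξ0 Σ_j ξ_j C^j + Σ_{j,k} ξ_j ξ_k B^{jk}, and let A(ξ0,ξ) be the (d+1)n × (d+1)n block matrix with first block row (B00 ξ0 + Σ_k ξ_k C^k, Σ_k ξ_k B^{1k}, ..., Σ_k ξ_k B^{dk}), and for i=1..d the (i+1)-th block row has −ξ_i I in the first block column, ξ0 I in the (i+1)-th block column, and 0 elsewhere. Then det A(ξ0,ξ) = ξ0^{(d−1)n} · det B(ξ0,ξ). -/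
/-!
Multiplying `A(ξ0, ξ)` on the right by the block matrix `[[ξ0 I, 0], [-S, I]]`, where `S` is the
lower left block column `(-ξ_i I)_i`, gives the block upper triangular matrix
`[[B(ξ0, ξ), *], [0, ξ0 I]]`. Hence `det A · ξ0^n = ξ0^{dn} · det B` for every `ξ0`; cancelling
`ξ0^n` proves the identity for `ξ0 ≠ 0`, and both sides are continuous in `ξ0`, so it also
holds at `ξ0 = 0`.
-/

open Matrix

/-- The second-order symbol `B(ξ0, ξ) = ξ0² B00 + ξ0 Σ_j ξ_j C^j + Σ_{j,k} ξ_j ξ_k B^{jk}`. -/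
noncomputable def Bsym (n d : ℕ) (B00 : Matrix (Fin n) (Fin n) ℝ)
    (Cc : Fin d → Matrix (Fin n) (Fin n) ℝ)
    (B : Fin d → Fin d → Matrix (Fin n) (Fin n) ℝ)
    (ξ0 : ℝ) (ξ : Fin d → ℝ) : Matrix (Fin n) (Fin n) ℝ :=
  ξ0 ^ 2 • B00 + ξ0 • ∑ j, ξ j • Cc j + ∑ j, ∑ k, (ξ j * ξ k) • B j k

/-- The first-order block symbol `A(ξ0, ξ)`, of size `(d+1)n × (d+1)n`; block index
`Sum.inl ()` is the `P`-block and `Sum.inr i` the `Q_i`-blocks. -/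
noncomputable def Asym (n d : ℕ) (B00 : Matrix (Fin n) (Fin n) ℝ)
    (Cc : Fin d → Matrix (Fin n) (Fin n) ℝ)
    (B : Fin d → Fin d → Matrix (Fin n) (Fin n) ℝ)
    (ξ0 : ℝ) (ξ : Fin d → ℝ) :
    Matrix ((Unit ⊕ Fin d) × Fin n) ((Unit ⊕ Fin d) × Fin n) ℝ :=
  fun p q =>
    match p, q with
    | (Sum.inl _, a), (Sum.inl _, b) => (ξ0 • B00 + ∑ k, ξ k • Cc k) a b
    | (Sum.inl _, a), (Sum.inr j, b) => (∑ k, ξ k • B j k) a b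
    | (Sum.inr i, a), (Sum.inl _, b) => if a = b then -ξ i else 0
    | (Sum.inr i, a), (Sum.inr j, b) => if i = j ∧ a = b then ξ0 else 0

namespace Matrix

variable {R m n : Type*} [CommRing R] [Fintype m] [Fintype n] [DecidableEq m] [DecidableEq n]

theorem det_fromBlocks_smul_one₂₂_mul_pow (P : Matrix m m R) (Q : Matrix m n R)
    (S : Matrix n m R) (c : R) :
    (fromBlocks P Q S (c • 1)).det * c ^ Fintype.card m =
      c ^ Fintype.card n * (c • P - Q * S).det := by
  have hprod : fromBlocks P Q S (c • 1) * fromBlocks (c • 1) 0 (-S) 1 =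
      fromBlocks (c • P - Q * S) Q 0 (c • 1) := by
    rw [fromBlocks_multiply]
    congr 1 <;> simp [Matrix.mul_smul, sub_eq_add_neg]
  have := congrArg det hprod
  rw [det_mul, det_fromBlocks_zero₁₂, det_fromBlocks_zero₂₁, det_smul, det_smul, det_one,
    det_one] at this
  simpa [mul_comm] using this

end Matrix

section Symbols

variable (n d : ℕ) (B00 : Matrix (Fin n) (Fin n) ℝ) (Cc : Fin d → Matrix (Fin n) (Fin n) ℝ)
  (B : Fin d → Fin d → Matrix (Fin n) (Fin n) ℝ) (ξ0 : ℝ) (ξ : Fin d → ℝ)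

def blockEquiv : (Unit ⊕ Fin d) × Fin n ≃ Fin n ⊕ (Fin d × Fin n) :=
  (Equiv.sumProdDistrib Unit (Fin d) (Fin n)).trans
    (Equiv.sumCongr (Equiv.punitProd (Fin n)) (Equiv.refl _))

noncomputable def Asym₁₂ : Matrix (Fin n) (Fin d × Fin n) ℝ :=
  of fun a q => (∑ k, ξ k • B q.1 k) a q.2

def Asym₂₁ : Matrix (Fin d × Fin n) (Fin n) ℝ :=
  of fun p b => if p.2 = b then -ξ p.1 else 0

theorem Asym_eq_submatrix_fromBlocks :
    Asym n d B00 Cc B ξ0 ξ =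
      (fromBlocks (ξ0 • B00 + ∑ k, ξ k • Cc k) (Asym₁₂ n d B ξ) (Asym₂₁ n d ξ)
        (ξ0 • 1)).submatrix (blockEquiv n d) (blockEquiv n d) := by
  ext ⟨_ | i, a⟩ ⟨_ | j, b⟩ <;>
    simp [Asym, Asym₁₂, Asym₂₁, blockEquiv, Matrix.smul_apply, Matrix.one_apply, Prod.ext_iff]

theorem smul_sub_mul_eq_Bsym :
    ξ0 • (ξ0 • B00 + ∑ k, ξ k • Cc k) - Asym₁₂ n d B ξ * Asym₂₁ n d ξ =
      Bsym n d B00 Cc B ξ0 ξ := by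
  ext a b
  simp only [Bsym, Asym₁₂, Asym₂₁, Matrix.sub_apply, Matrix.add_apply, Matrix.smul_apply,
    Matrix.sum_apply, Matrix.mul_apply, of_apply, Fintype.sum_prod_type, smul_eq_mul, mul_ite,
    mul_neg, mul_zero, Finset.sum_ite_eq', Finset.mem_univ, if_true, Finset.sum_neg_distrib,
    sub_neg_eq_add, Finset.sum_mul, Finset.mul_sum, mul_add]
  congr 1
  · ring
  · exact Finset.sum_congr rfl fun j _ => Finset.sum_congr rfl fun k _ => by ring

theorem det_Asym_mul_pow :
    (Asym n d B00 Cc B ξ0 ξ).det * ξ0 ^ n = ξ0 ^ (d * n) * (Bsym n d B00 Cc B ξ0 ξ).det := by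
  rw [Asym_eq_submatrix_fromBlocks, det_submatrix_equiv_self, ← smul_sub_mul_eq_Bsym]
  convert det_fromBlocks_smul_one₂₂_mul_pow _ _ _ ξ0 using 3 <;>
    simp only [Fintype.card_fin, Fintype.card_prod]

theorem det_Asym_of_ne_zero (hd : 1 ≤ d) (hξ0 : ξ0 ≠ 0) :
    (Asym n d B00 Cc B ξ0 ξ).det = ξ0 ^ ((d - 1) * n) * (Bsym n d B00 Cc B ξ0 ξ).det := by
  have hdn : d * n = (d - 1) * n + n := by
    rw [← Nat.succ_mul, Nat.succ_eq_add_one, Nat.sub_add_cancel hd]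
  apply mul_right_cancel₀ (pow_ne_zero n hξ0)
  rw [det_Asym_mul_pow, hdn, pow_add]
  ring

theorem continuous_Asym : Continuous fun t => Asym n d B00 Cc B t ξ := by
  refine continuous_pi fun p => continuous_pi fun q => ?_
  rcases p with ⟨_ | i, a⟩ <;> rcases q with ⟨_ | j, b⟩ <;> simp only [Asym] <;>
    (try split_ifs) <;> fun_prop

theorem continuous_Bsym : Continuous fun t => Bsym n d B00 Cc B t ξ := by
  unfold Bsym
  fun_prop

end Symbols

/-- Lemma 1(i): `det A(ξ0,ξ) = ξ0^{(d−1)n} · det B(ξ0,ξ)`. -/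
theorem stmt0 (n d : ℕ) (hd : 1 ≤ d) (B00 : Matrix (Fin n) (Fin n) ℝ)
    (Cc : Fin d → Matrix (Fin n) (Fin n) ℝ)
    (B : Fin d → Fin d → Matrix (Fin n) (Fin n) ℝ)
    (ξ0 : ℝ) (ξ : Fin d → ℝ) :
    (Asym n d B00 Cc B ξ0 ξ).det = ξ0 ^ ((d - 1) * n) * (Bsym n d B00 Cc B ξ0 ξ).det := by
  have hA := (continuous_Asym n d B00 Cc B ξ).matrix_det
  have hB := (continuous_pow ((d - 1) * n)).mul (continuous_Bsym n d B00 Cc B ξ).matrix_det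
  have hfun := Continuous.ext_on (dense_compl_singleton 0) hA hB
    fun t ht => det_Asym_of_ne_zero n d B00 Cc B t ξ hd ht
  exact congrFun hfun ξ0
end

section
/- With the block matrix A(ξ0,ξ) as above and ξ0 ≠ 0, a vector (x̄_0, x̄_1, ..., x̄_d) ∈ ℝ^{(d+1)n} lies in the kernel of A(ξ0,ξ) if and only if there exists x ∈ ker B(ξ0,ξ) with x̄_α = ξ_α x for all α = 0,1,...,d (where ξ_0 := ξ0). In particular, for ξ0 ≠ 0, dim ker A(ξ0,ξ) = dim ker B(ξ0,ξ). -/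
/-!
For `ξ0 ≠ 0` the last `d` block rows of `A(ξ0, ξ) v = 0` read `ξ0 v_i = ξ_i v_0`, so every
kernel vector is `v = (ξ0 x, ξ_1 x, …, ξ_d x)` with `x = v_0 / ξ0`. On such vectors the first
block row of `A` is `(ξ0 B00 + Σ ξ_k C^k)(ξ0 x) + Σ_j (Σ_k ξ_k B^{jk})(ξ_j x) = B(ξ0, ξ) x`.
Hence `x ↦ (ξ0 x, ξ_1 x, …, ξ_d x)` is an injective linear map carrying `ker B` onto `ker A`.
-/

open Matrix

section SymbolKernel

variable {n d : ℕ} (B00 : Matrix (Fin n) (Fin n) ℝ) (Cc : Fin d → Matrix (Fin n) (Fin n) ℝ)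
  (B : Fin d → Fin d → Matrix (Fin n) (Fin n) ℝ) (ξ0 : ℝ) (ξ : Fin d → ℝ)

noncomputable def symbolLift : (Fin n → ℝ) →ₗ[ℝ] (Unit ⊕ Fin d) × Fin n → ℝ :=
  LinearMap.pi fun p => Sum.elim (fun _ => ξ0) ξ p.1 • LinearMap.proj p.2

@[simp]
lemma symbolLift_apply_inl (x : Fin n → ℝ) (u : Unit) (a : Fin n) :
    symbolLift ξ0 ξ x (Sum.inl u, a) = ξ0 * x a :=
  rfl

@[simp]
lemma symbolLift_apply_inr (x : Fin n → ℝ) (i : Fin d) (a : Fin n) :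
    symbolLift ξ0 ξ x (Sum.inr i, a) = ξ i * x a :=
  rfl

lemma eq_symbolLift_iff (v : (Unit ⊕ Fin d) × Fin n → ℝ) (x : Fin n → ℝ) :
    v = symbolLift ξ0 ξ x ↔
      (∀ a, v (Sum.inl (), a) = ξ0 * x a) ∧ (∀ i a, v (Sum.inr i, a) = ξ i * x a) := by
  simp only [funext_iff, Prod.forall, Sum.forall, Unique.forall_iff, symbolLift_apply_inl,
    symbolLift_apply_inr]

lemma symbolLift_injective (hξ0 : ξ0 ≠ 0) : Function.Injective (symbolLift (n := n) ξ0 ξ) := by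
  intro x y hxy
  funext a
  have := congrFun hxy (Sum.inl (), a)
  simp only [symbolLift_apply_inl] at this
  exact mul_left_cancel₀ hξ0 this

lemma Asym_mulVec_inr (v : (Unit ⊕ Fin d) × Fin n → ℝ) (i : Fin d) (a : Fin n) :
    (Asym n d B00 Cc B ξ0 ξ *ᵥ v) (Sum.inr i, a) =
      -ξ i * v (Sum.inl (), a) + ξ0 * v (Sum.inr i, a) := by
  simp [Asym, mulVec, dotProduct, Fintype.sum_prod_type, Fintype.sum_sum_type, ite_and]

lemma Asym_mulVec_inl (v : (Unit ⊕ Fin d) × Fin n → ℝ) (u : Unit) (a : Fin n) :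
    (Asym n d B00 Cc B ξ0 ξ *ᵥ v) (Sum.inl u, a) =
      ∑ b, (ξ0 • B00 + ∑ k, ξ k • Cc k) a b * v (Sum.inl (), b) +
        ∑ j, ∑ b, (∑ k, ξ k • B j k) a b * v (Sum.inr j, b) := by
  simp [Asym, mulVec, dotProduct, Fintype.sum_prod_type, Fintype.sum_sum_type]

lemma Asym_mulVec_symbolLift_inl (x : Fin n → ℝ) (u : Unit) (a : Fin n) :
    (Asym n d B00 Cc B ξ0 ξ *ᵥ symbolLift ξ0 ξ x) (Sum.inl u, a) =
      (Bsym n d B00 Cc B ξ0 ξ *ᵥ x) a := by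
  rw [Asym_mulVec_inl, Finset.sum_comm (γ := Fin d), ← Finset.sum_add_distrib]
  refine Finset.sum_congr rfl fun b _ => ?_
  simp only [Bsym, Matrix.add_apply, Matrix.smul_apply, Matrix.sum_apply, smul_eq_mul,
    symbolLift_apply_inl, symbolLift_apply_inr]
  have hB : ∑ j, (∑ k, ξ k * B j k a b) * (ξ j * x b) =
      (∑ j, ∑ k, ξ j * ξ k * B j k a b) * x b := by
    simp only [Finset.sum_mul]
    exact Finset.sum_congr rfl fun j _ => Finset.sum_congr rfl fun k _ => by ring
  rw [hB]
  ring

lemma Asym_mulVec_symbolLift_inr (x : Fin n → ℝ) (i : Fin d) (a : Fin n) :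
    (Asym n d B00 Cc B ξ0 ξ *ᵥ symbolLift ξ0 ξ x) (Sum.inr i, a) = 0 := by
  rw [Asym_mulVec_inr, symbolLift_apply_inl, symbolLift_apply_inr]
  ring

lemma Asym_mulVec_symbolLift_eq_zero_iff (x : Fin n → ℝ) :
    Asym n d B00 Cc B ξ0 ξ *ᵥ symbolLift ξ0 ξ x = 0 ↔ Bsym n d B00 Cc B ξ0 ξ *ᵥ x = 0 := by
  simp only [funext_iff, Prod.forall, Sum.forall, Unique.forall_iff, Pi.zero_apply,
    Asym_mulVec_symbolLift_inl, Asym_mulVec_symbolLift_inr, implies_true, and_true]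

lemma eq_symbolLift_of_Asym_mulVec_eq_zero (hξ0 : ξ0 ≠ 0) {v : (Unit ⊕ Fin d) × Fin n → ℝ}
    (hv : Asym n d B00 Cc B ξ0 ξ *ᵥ v = 0) :
    v = symbolLift ξ0 ξ (fun a => ξ0⁻¹ * v (Sum.inl (), a)) := by
  refine (eq_symbolLift_iff ξ0 ξ _ _).2 ⟨fun a => by field_simp, fun i a => ?_⟩
  have hrow := Asym_mulVec_inr B00 Cc B ξ0 ξ v i a
  rw [hv, Pi.zero_apply] at hrow
  field_simp
  linarith

lemma Asym_mulVec_eq_zero_iff (hξ0 : ξ0 ≠ 0) (v : (Unit ⊕ Fin d) × Fin n → ℝ) :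
    Asym n d B00 Cc B ξ0 ξ *ᵥ v = 0 ↔
      ∃ x, Bsym n d B00 Cc B ξ0 ξ *ᵥ x = 0 ∧ v = symbolLift ξ0 ξ x := by
  constructor
  · intro hv
    have hlift := eq_symbolLift_of_Asym_mulVec_eq_zero B00 Cc B ξ0 ξ hξ0 hv
    refine ⟨_, ?_, hlift⟩
    rw [← Asym_mulVec_symbolLift_eq_zero_iff, ← hlift, hv]
  · rintro ⟨x, hx, rfl⟩
    exact (Asym_mulVec_symbolLift_eq_zero_iff B00 Cc B ξ0 ξ x).2 hx

lemma ker_Asym_eq_map_ker_Bsym (hξ0 : ξ0 ≠ 0) :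
    LinearMap.ker (Asym n d B00 Cc B ξ0 ξ).mulVecLin =
      (LinearMap.ker (Bsym n d B00 Cc B ξ0 ξ).mulVecLin).map (symbolLift ξ0 ξ) := by
  ext v
  simp only [LinearMap.mem_ker, mulVecLin_apply, Submodule.mem_map,
    Asym_mulVec_eq_zero_iff B00 Cc B ξ0 ξ hξ0, eq_comm (a := v)]

end SymbolKernel

/-- Lemma 1(ii): for `ξ0 ≠ 0`, the kernel of `A(ξ0,ξ)` consists exactly of the vectors
`(ξ0 x, ξ_1 x, ..., ξ_d x)` with `x ∈ ker B(ξ0,ξ)`; in particular the kernels have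
equal dimension. -/
theorem stmt1 (n d : ℕ) (B00 : Matrix (Fin n) (Fin n) ℝ)
    (Cc : Fin d → Matrix (Fin n) (Fin n) ℝ)
    (B : Fin d → Fin d → Matrix (Fin n) (Fin n) ℝ)
    (ξ0 : ℝ) (hξ0 : ξ0 ≠ 0) (ξ : Fin d → ℝ) :
    (∀ v : (Unit ⊕ Fin d) × Fin n → ℝ,
      (Asym n d B00 Cc B ξ0 ξ).mulVec v = 0 ↔
        ∃ x : Fin n → ℝ, (Bsym n d B00 Cc B ξ0 ξ).mulVec x = 0 ∧
          (∀ a, v (Sum.inl (), a) = ξ0 * x a) ∧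
          (∀ i a, v (Sum.inr i, a) = ξ i * x a)) ∧
    Module.finrank ℝ (LinearMap.ker (Asym n d B00 Cc B ξ0 ξ).mulVecLin) =
      Module.finrank ℝ (LinearMap.ker (Bsym n d B00 Cc B ξ0 ξ).mulVecLin) := by
  refine ⟨fun v => ?_, ?_⟩
  · simp only [Asym_mulVec_eq_zero_iff B00 Cc B ξ0 ξ hξ0, eq_symbolLift_iff]
  · rw [ker_Asym_eq_map_ker_Bsym B00 Cc B ξ0 ξ hξ0]
    exact (Submodule.equivMapOfInjective _ (symbolLift_injective ξ0 ξ hξ0) _).finrank_eq.symm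
end

section
/- Suppose the second-order constant-coefficient system B00 U_tt + C^j U_{tx^j} + B^{jk} U_{x^jx^k} = 0 is semi-strictly definitely hyperbolic: B00 is negative definite; for every unit vector ξ ∈ S^{d−1} all zeros of p^ξ(ξ0) = det B(ξ0,ξ) are real and nonzero; and for each zero of multiplicity ν, dim ker B(ξ0,ξ) = ν. Then for every unit ξ, the first-order symbol pencil (A^0, A(ξ)) is diagonalizable over ℝ: the sum over all eigenvalues λ (including λ = 0, with eigenspace of dimension (d−1)n) of the dimensions of the eigenspaces of (A^0)^{-1}A(ξ) equals (d+1)n. -/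
open Matrix

/-- The dispersion polynomial `p^ξ(ξ0) = det B(ξ0, ξ)` as a polynomial in `ξ0`. -/
noncomputable def dispPoly (n d : ℕ) (B00 : Matrix (Fin n) (Fin n) ℝ)
    (Cc : Fin d → Matrix (Fin n) (Fin n) ℝ)
    (B : Fin d → Fin d → Matrix (Fin n) (Fin n) ℝ)
    (ξ : Fin d → ℝ) : Polynomial ℝ :=
  ((Polynomial.X : Polynomial ℝ) ^ 2 • B00.map Polynomial.C +
    (Polynomial.X : Polynomial ℝ) • (∑ j, ξ j • Cc j).map Polynomial.C +
    (∑ j, ∑ k, (ξ j * ξ k) • B j k).map Polynomial.C).det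

/-- The block-diagonal matrix `A⁰ = diag(B00, I, ..., I)` of the first-order formulation. -/
noncomputable def A0mat (n d : ℕ) (B00 : Matrix (Fin n) (Fin n) ℝ) :
    Matrix ((Unit ⊕ Fin d) × Fin n) ((Unit ⊕ Fin d) × Fin n) ℝ :=
  fun p q =>
    match p, q with
    | (Sum.inl _, a), (Sum.inl _, b) => B00 a b
    | (Sum.inr i, a), (Sum.inr j, b) => if i = j ∧ a = b then 1 else 0
    | _, _ => 0

/-!
Since `A⁰` is invertible, the `μ`-eigenspace of `(A⁰)⁻¹ A(0, ξ)` is `ker A(-μ, ξ)`. For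
`ξ0 ≠ 0`, `ker A(ξ0, ξ)` consists of the lifts `(ξ0 V, ξ V)` of `V ∈ ker B(ξ0, ξ)`, so each
root `ξ0` of `p^ξ` contributes its multiplicity, and the real roots together contribute
`deg p^ξ = 2n`. For `ξ0 = 0` the kernel is `P = 0` together with the kernel of
`Q ↦ ∑_j (∑_k ξ_k B^{jk}) Q_j`, a surjection onto `ℝⁿ` because `B(0, ξ)` is invertible (`0` is not a
root); it has dimension `dn - n`. Eigenspaces of distinct eigenvalues are independent, so their
sum has dimension `(d + 1) n`.
-/

open Polynomial

theorem iSupIndep.finrank_biSup {K V ι : Type*} [DivisionRing K] [AddCommGroup V] [Module K V]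
    [FiniteDimensional K V] {p : ι → Submodule K V} (hp : iSupIndep p) (s : Finset ι) :
    Module.finrank K ↥(⨆ i ∈ s, p i) = ∑ i ∈ s, Module.finrank K ↥(p i) := by
  classical
  induction s using Finset.induction_on with
  | empty => simp
  | insert a s ha ih =>
    have hdisj : Disjoint (p a) (⨆ i ∈ s, p i) := hp.disjoint_biSup (by simpa using ha)
    rw [Finset.sum_insert ha, ← ih, Finset.iSup_insert,
      ← Submodule.finrank_sup_add_finrank_inf_eq, disjoint_iff.mp hdisj, finrank_bot, add_zero]

theorem Matrix.eigenspace_inv_mul_mulVecLin {K ι : Type*} [Field K] [Fintype ι] [DecidableEq ι]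
    {M : Matrix ι ι K} (hM : IsUnit M) (A : Matrix ι ι K) (μ : K) :
    Module.End.eigenspace (M⁻¹ * A).mulVecLin μ = LinearMap.ker (A - μ • M).mulVecLin := by
  ext x
  rw [Module.End.mem_eigenspace_iff, LinearMap.mem_ker, mulVecLin_apply, mulVecLin_apply,
    sub_mulVec, smul_mulVec, sub_eq_zero, ← mulVec_mulVec,
    ← (mulVec_injective_iff_isUnit.mpr hM).eq_iff, mulVec_mulVec,
    mul_nonsing_inv _ ((isUnit_iff_isUnit_det M).mp hM), one_mulVec, mulVec_smul]

theorem Polynomial.coeff_det_X_sq_add_X_add_C {n α : Type*} [DecidableEq n] [Fintype n]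
    [CommRing α] (A B D : Matrix n n α) :
    coeff (det ((X : α[X]) ^ 2 • A.map C + (X : α[X]) • B.map C + D.map C))
      (2 * Fintype.card n) = det A := by
  rw [det_apply, det_apply, finsetSum_coeff]
  refine Finset.sum_congr rfl fun g _ => ?_
  convert! coeff_smul (R := α) (Equiv.Perm.sign g) _ _
  rw [mul_comm]
  convert! (coeff_prod_of_natDegree_le (R := α) _ _ _ _).symm
  · simp
  · rintro p -
    dsimp only [Matrix.add_apply, Matrix.smul_apply, map_apply, smul_eq_mul]
    compute_degree

section Symbols

variable {n d : ℕ} {B00 : Matrix (Fin n) (Fin n) ℝ} {Cc : Fin d → Matrix (Fin n) (Fin n) ℝ}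
  {B : Fin d → Fin d → Matrix (Fin n) (Fin n) ℝ} {ξ0 : ℝ} {ξ : Fin d → ℝ}

def blockVec (P : Fin n → ℝ) (Q : Fin d → Fin n → ℝ) : (Unit ⊕ Fin d) × Fin n → ℝ :=
  fun q => Sum.elim (fun _ => P) Q q.1 q.2

theorem blockVec_eta (x : (Unit ⊕ Fin d) × Fin n → ℝ) :
    blockVec (fun a => x (Sum.inl (), a)) (fun j a => x (Sum.inr j, a)) = x := by
  funext q; rcases q with ⟨_ | _, _⟩ <;> rfl

theorem blockVec_inj {P P' : Fin n → ℝ} {Q Q' : Fin d → Fin n → ℝ} :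
    blockVec P Q = blockVec P' Q' ↔ P = P' ∧ Q = Q' := by
  refine ⟨fun h => ⟨funext fun a => congrFun h (Sum.inl (), a),
    funext fun j => funext fun a => congrFun h (Sum.inr j, a)⟩, ?_⟩
  rintro ⟨rfl, rfl⟩
  rfl

theorem blockVec_zero : blockVec (0 : Fin n → ℝ) (0 : Fin d → Fin n → ℝ) = 0 :=
  blockVec_eta 0

theorem blockVec_eq_zero_iff {P : Fin n → ℝ} {Q : Fin d → Fin n → ℝ} :
    blockVec P Q = 0 ↔ P = 0 ∧ Q = 0 := by
  rw [← blockVec_zero, blockVec_inj]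

variable (B ξ) in
/-- The `(P, Q)` block row of `A(ξ0, ξ)`. -/
noncomputable def fluxMap : (Fin d → Fin n → ℝ) →ₗ[ℝ] (Fin n → ℝ) :=
  ∑ j, (∑ k, ξ k • B j k).mulVecLin ∘ₗ LinearMap.proj j

theorem fluxMap_apply (Q : Fin d → Fin n → ℝ) :
    fluxMap B ξ Q = ∑ j, (∑ k, ξ k • B j k) *ᵥ Q j := by
  simp [fluxMap, Matrix.sum_mulVec, Matrix.smul_mulVec]

theorem Asym_mulVec_blockVec (P : Fin n → ℝ) (Q : Fin d → Fin n → ℝ) :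
    Asym n d B00 Cc B ξ0 ξ *ᵥ blockVec P Q =
      blockVec ((ξ0 • B00 + ∑ k, ξ k • Cc k) *ᵥ P + fluxMap B ξ Q)
        (fun i => ξ0 • Q i - ξ i • P) := by
  funext q; rcases q with ⟨_ | i, a⟩
  · simp [Matrix.mulVec, dotProduct, Fintype.sum_prod_type, Fintype.sum_sum_type, Asym,
      blockVec, fluxMap_apply, Finset.sum_apply]
  · simp [Matrix.mulVec, dotProduct, Fintype.sum_prod_type, Fintype.sum_sum_type, Asym,
      blockVec, ite_and, Finset.sum_ite_eq, ite_mul]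
    ring

theorem A0mat_mulVec_blockVec (P : Fin n → ℝ) (Q : Fin d → Fin n → ℝ) :
    A0mat n d B00 *ᵥ blockVec P Q = blockVec (B00 *ᵥ P) Q := by
  funext q; rcases q with ⟨_ | i, a⟩
  · simp [Matrix.mulVec, dotProduct, Fintype.sum_prod_type, Fintype.sum_sum_type, A0mat,
      blockVec]
  · simp [Matrix.mulVec, dotProduct, Fintype.sum_prod_type, Fintype.sum_sum_type, A0mat,
      blockVec, ite_and, Finset.sum_ite_eq, ite_mul]

theorem Bsym_mulVec (P : Fin n → ℝ) :
    Bsym n d B00 Cc B ξ0 ξ *ᵥ P =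
      (ξ0 • B00 + ∑ k, ξ k • Cc k) *ᵥ (ξ0 • P) + fluxMap B ξ (fun j => ξ j • P) := by
  simp only [Bsym, fluxMap_apply, Matrix.add_mulVec, Matrix.sum_mulVec, Matrix.smul_mulVec,
    Matrix.mulVec_smul, smul_add, Finset.smul_sum, smul_smul, sq]

theorem Asym_sub_smul_A0mat (μ : ℝ) :
    Asym n d B00 Cc B 0 ξ - μ • A0mat n d B00 = Asym n d B00 Cc B (-μ) ξ := by
  funext p q; rcases p with ⟨_ | i, a⟩ <;> rcases q with ⟨_ | j, b⟩ <;>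
    simp [Asym, A0mat, Matrix.sub_apply, Matrix.add_apply, Matrix.smul_apply] <;>
    (try split_ifs) <;> ring

theorem isUnit_A0mat (hB00 : IsUnit B00) : IsUnit (A0mat n d B00) := by
  rw [← mulVec_injective_iff_isUnit]
  intro x y hxy
  rw [← blockVec_eta x, ← blockVec_eta y, A0mat_mulVec_blockVec, A0mat_mulVec_blockVec,
    blockVec_inj] at hxy
  rw [← blockVec_eta x, ← blockVec_eta y, blockVec_inj]
  exact ⟨mulVec_injective_iff_isUnit.mpr hB00 hxy.1, hxy.2⟩

theorem eigenspace_eq_ker_Asym (hB00 : IsUnit B00) (μ : ℝ) :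
    Module.End.eigenspace ((A0mat n d B00)⁻¹ * Asym n d B00 Cc B 0 ξ).mulVecLin μ =
      LinearMap.ker (Asym n d B00 Cc B (-μ) ξ).mulVecLin := by
  rw [eigenspace_inv_mul_mulVecLin (isUnit_A0mat hB00), Asym_sub_smul_A0mat]

variable (ξ0 ξ) in
/-- `(P, Q) = (ξ0 V, ξ V)`: the first-order variables `(U_t, ∇U)` of the plane wave
`U = V e^{i(ξ0 t + ξ·x)}`. -/
noncomputable def gradLift : (Fin n → ℝ) →ₗ[ℝ] ((Unit ⊕ Fin d) × Fin n → ℝ) where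
  toFun V := blockVec (ξ0 • V) (fun i => ξ i • V)
  map_add' V W := by
    funext q; rcases q with ⟨_ | i, a⟩ <;> simp [blockVec]
  map_smul' c V := by
    funext q; rcases q with ⟨_ | i, a⟩ <;> simp [blockVec, mul_left_comm]

theorem gradLift_apply (V : Fin n → ℝ) :
    gradLift ξ0 ξ V = blockVec (ξ0 • V) (fun i => ξ i • V) := rfl

theorem gradLift_injective (hξ0 : ξ0 ≠ 0) : Function.Injective (gradLift (n := n) ξ0 ξ) := by
  intro V W h
  rw [gradLift_apply, gradLift_apply, blockVec_inj] at h
  exact smul_right_injective _ hξ0 h.1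

theorem Asym_mulVec_gradLift (V : Fin n → ℝ) :
    Asym n d B00 Cc B ξ0 ξ *ᵥ gradLift ξ0 ξ V = blockVec (Bsym n d B00 Cc B ξ0 ξ *ᵥ V) 0 := by
  rw [gradLift_apply, Asym_mulVec_blockVec, Bsym_mulVec]
  congr 1
  funext i
  rw [smul_comm, sub_self, Pi.zero_apply]

theorem ker_Asym_eq_map_gradLift (hξ0 : ξ0 ≠ 0) :
    LinearMap.ker (Asym n d B00 Cc B ξ0 ξ).mulVecLin =
      (LinearMap.ker (Bsym n d B00 Cc B ξ0 ξ).mulVecLin).map (gradLift ξ0 ξ) := by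
  ext x
  simp only [Submodule.mem_map, LinearMap.mem_ker, mulVecLin_apply]
  constructor
  · intro hx
    set P : Fin n → ℝ := fun a => x (Sum.inl (), a)
    set Q : Fin d → Fin n → ℝ := fun j a => x (Sum.inr j, a)
    have hQ : (fun i => ξ0 • Q i - ξ i • P) = 0 := by
      rw [← blockVec_eta x, Asym_mulVec_blockVec, blockVec_eq_zero_iff] at hx
      exact hx.2
    have hx_eq : gradLift ξ0 ξ (ξ0⁻¹ • P) = x := by
      rw [gradLift_apply, ← blockVec_eta x, blockVec_inj]
      refine ⟨smul_inv_smul₀ hξ0 P, funext fun i => ?_⟩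
      rw [smul_comm, ← sub_eq_zero.mp (congrFun hQ i), inv_smul_smul₀ hξ0]
    refine ⟨ξ0⁻¹ • P, ?_, hx_eq⟩
    rw [← hx_eq, Asym_mulVec_gradLift, blockVec_eq_zero_iff] at hx
    exact hx.1
  · rintro ⟨V, hV, rfl⟩
    rw [Asym_mulVec_gradLift, hV, blockVec_eq_zero_iff]
    exact ⟨rfl, rfl⟩

theorem finrank_ker_Asym (hξ0 : ξ0 ≠ 0) :
    Module.finrank ℝ (LinearMap.ker (Asym n d B00 Cc B ξ0 ξ).mulVecLin) =
      Module.finrank ℝ (LinearMap.ker (Bsym n d B00 Cc B ξ0 ξ).mulVecLin) := by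
  rw [ker_Asym_eq_map_gradLift hξ0]
  exact (Submodule.equivMapOfInjective _ (gradLift_injective hξ0) _).finrank_eq.symm

variable (n d) in
noncomputable def qInclusion : (Fin d → Fin n → ℝ) →ₗ[ℝ] ((Unit ⊕ Fin d) × Fin n → ℝ) where
  toFun Q := blockVec 0 Q
  map_add' _ _ := by funext q; rcases q with ⟨_ | i, a⟩ <;> simp [blockVec]
  map_smul' _ _ := by funext q; rcases q with ⟨_ | i, a⟩ <;> simp [blockVec]

theorem qInclusion_apply (Q : Fin d → Fin n → ℝ) : qInclusion n d Q = blockVec 0 Q := rfl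

theorem qInclusion_injective : Function.Injective (qInclusion n d) := fun _ _ h =>
  (blockVec_inj.mp h).2

theorem ker_Asym_zero_eq_map_qInclusion (hξ : ξ ≠ 0) :
    LinearMap.ker (Asym n d B00 Cc B 0 ξ).mulVecLin =
      (LinearMap.ker (fluxMap B ξ)).map (qInclusion n d) := by
  obtain ⟨i, hi⟩ : ∃ i, ξ i ≠ 0 := Function.ne_iff.mp hξ
  ext x
  simp only [Submodule.mem_map, LinearMap.mem_ker, mulVecLin_apply]
  rw [← blockVec_eta x, Asym_mulVec_blockVec, blockVec_eq_zero_iff]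
  constructor
  · rintro ⟨hP, hQ⟩
    have hP0 : (fun a => x (Sum.inl (), a)) = 0 := by
      simpa [hi] using congrFun hQ i
    refine ⟨fun j a => x (Sum.inr j, a), ?_, ?_⟩
    · simpa [hP0] using hP
    · rw [qInclusion_apply, hP0]
  · rintro ⟨Q, hQ, hx⟩
    obtain ⟨hP0, rfl⟩ := blockVec_inj.mp hx
    simp [← hP0, hQ]
    rfl

theorem finrank_ker_fluxMap_add (hB : IsUnit (Bsym n d B00 Cc B 0 ξ)) :
    Module.finrank ℝ (LinearMap.ker (fluxMap B ξ)) + n = d * n := by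
  have hsurj : Function.Surjective (fluxMap B ξ) := by
    intro y
    obtain ⟨V, rfl⟩ := mulVec_surjective_iff_isUnit.mpr hB y
    exact ⟨fun j => ξ j • V, by simp [Bsym_mulVec]⟩
  have := LinearMap.finrank_range_add_finrank_ker (fluxMap B ξ)
  rw [LinearMap.range_eq_top.mpr hsurj, finrank_top] at this
  simp only [Module.finrank_pi_fintype, Module.finrank_self, Finset.sum_const, Finset.card_univ,
    Fintype.card_fin, smul_eq_mul, mul_one] at this
  omega

theorem finrank_eigenspace_zero_add (hB00 : IsUnit B00) (hξ : ξ ≠ 0)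
    (hB : IsUnit (Bsym n d B00 Cc B 0 ξ)) :
    Module.finrank ℝ
      (Module.End.eigenspace ((A0mat n d B00)⁻¹ * Asym n d B00 Cc B 0 ξ).mulVecLin 0) + n =
        d * n := by
  rw [eigenspace_eq_ker_Asym hB00, neg_zero, ker_Asym_zero_eq_map_qInclusion hξ,
    ← (Submodule.equivMapOfInjective _ qInclusion_injective _).finrank_eq]
  exact finrank_ker_fluxMap_add hB

theorem finrank_eigenspace_neg (hB00 : IsUnit B00) {t : ℝ} (ht : t ≠ 0) :
    Module.finrank ℝ
      (Module.End.eigenspace ((A0mat n d B00)⁻¹ * Asym n d B00 Cc B 0 ξ).mulVecLin (-t)) =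
        Module.finrank ℝ (LinearMap.ker (Bsym n d B00 Cc B t ξ).mulVecLin) := by
  rw [eigenspace_eq_ker_Asym hB00, neg_neg, finrank_ker_Asym ht]

theorem dispPoly_eval (t : ℝ) :
    (dispPoly n d B00 Cc B ξ).eval t = (Bsym n d B00 Cc B t ξ).det := by
  rw [dispPoly, ← coe_evalRingHom, RingHom.map_det]
  congr 1
  ext a b
  simp [Bsym]
  ring

theorem coeff_dispPoly : (dispPoly n d B00 Cc B ξ).coeff (2 * n) = B00.det := by
  simpa using!
    coeff_det_X_sq_add_X_add_C B00 (∑ j, ξ j • Cc j) (∑ j, ∑ k, (ξ j * ξ k) • B j k)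

theorem coeff_dispPoly_ne_zero (hB00 : IsUnit B00) :
    (dispPoly n d B00 Cc B ξ).coeff (2 * n) ≠ 0 := by
  rw [coeff_dispPoly]
  exact ((isUnit_iff_isUnit_det _).mp hB00).ne_zero

theorem two_mul_le_card_roots_dispPoly (hB00 : IsUnit B00)
    (hsplit : Splits (dispPoly n d B00 Cc B ξ)) : 2 * n ≤ (dispPoly n d B00 Cc B ξ).roots.card := by
  rw [splits_iff_card_roots.mp hsplit]
  exact le_natDegree_of_ne_zero (coeff_dispPoly_ne_zero hB00)

theorem isUnit_Bsym_zero (hB00 : IsUnit B00) (h0 : (0 : ℝ) ∉ (dispPoly n d B00 Cc B ξ).roots) :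
    IsUnit (Bsym n d B00 Cc B 0 ξ) := by
  have hp : dispPoly n d B00 Cc B ξ ≠ 0 := fun h =>
    coeff_dispPoly_ne_zero hB00 (by rw [h, coeff_zero])
  rw [isUnit_iff_isUnit_det, isUnit_iff_ne_zero, ← dispPoly_eval]
  exact fun h => h0 ((mem_roots hp).mpr h)

end Symbols

/-- Semi-strict definite hyperbolicity (`B00 < 0`; for every unit `ξ` all zeros of
`p^ξ` are real and nonzero; each zero of multiplicity `ν` has `dim ker B(ξ0,ξ) = ν`)
implies that the first-order pencil is diagonalizable over `ℝ`: the eigenspaces of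
`(A⁰)⁻¹ A(ξ)` together span the whole `(d+1)n`-dimensional space. -/
theorem stmt9 (n d : ℕ) (B00 : Matrix (Fin n) (Fin n) ℝ)
    (Cc : Fin d → Matrix (Fin n) (Fin n) ℝ)
    (B : Fin d → Fin d → Matrix (Fin n) (Fin n) ℝ)
    (hB00 : (-B00).PosDef)
    (hreal : ∀ ξ : Fin d → ℝ, ∑ k, ξ k ^ 2 = 1 →
      Polynomial.Splits (dispPoly n d B00 Cc B ξ))
    (hnonzero : ∀ ξ : Fin d → ℝ, ∑ k, ξ k ^ 2 = 1 →
      (0 : ℝ) ∉ (dispPoly n d B00 Cc B ξ).roots)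
    (hmult : ∀ ξ : Fin d → ℝ, ∑ k, ξ k ^ 2 = 1 →
      ∀ ξ0 ∈ (dispPoly n d B00 Cc B ξ).roots,
        Module.finrank ℝ (LinearMap.ker (Bsym n d B00 Cc B ξ0 ξ).mulVecLin) =
          (dispPoly n d B00 Cc B ξ).roots.count ξ0) :
    ∀ ξ : Fin d → ℝ, ∑ k, ξ k ^ 2 = 1 →
      Module.finrank ℝ
        ↥(⨆ μ : ℝ, Module.End.eigenspace
          (((A0mat n d B00)⁻¹ * Asym n d B00 Cc B 0 ξ).mulVecLin) μ) = (d + 1) * n := by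
  intro ξ hξ
  replace hB00 : IsUnit B00 := by simpa using hB00.isUnit.neg
  have hξ0 : ξ ≠ 0 := by rintro rfl; simp at hξ
  have h0 := hnonzero ξ hξ
  set p := dispPoly n d B00 Cc B ξ
  set f := ((A0mat n d B00)⁻¹ * Asym n d B00 Cc B 0 ξ).mulVecLin
  set S := insert 0 (p.roots.toFinset.image Neg.neg)
  have hzero : Module.finrank ℝ (Module.End.eigenspace f 0) + n = d * n :=
    finrank_eigenspace_zero_add hB00 hξ0 (isUnit_Bsym_zero hB00 h0)
  have hroots :
      ∑ t ∈ p.roots.toFinset, Module.finrank ℝ (Module.End.eigenspace f (-t)) = p.roots.card := by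
    rw [← Multiset.toFinset_sum_count_eq]
    refine Finset.sum_congr rfl fun t ht => ?_
    rw [Multiset.mem_toFinset] at ht
    rw [finrank_eigenspace_neg hB00 (ne_of_mem_of_not_mem ht h0), hmult ξ hξ t ht]
  have hsum : ∑ μ ∈ S, Module.finrank ℝ (Module.End.eigenspace f μ) =
      Module.finrank ℝ (Module.End.eigenspace f 0) + p.roots.card := by
    rw [Finset.sum_insert (by simpa using h0), Finset.sum_image neg_injective.injOn, hroots]
  refine le_antisymm ((Submodule.finrank_le _).trans_eq ?_) ?_
  · simp [Module.finrank_fintype_fun_eq_card, add_mul, add_comm]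
  · calc (d + 1) * n ≤ ∑ μ ∈ S, Module.finrank ℝ (Module.End.eigenspace f μ) := by
          have : 2 * n ≤ p.roots.card := two_mul_le_card_roots_dispPoly hB00 (hreal ξ hξ)
          rw [hsum, add_one_mul]
          omega
      _ = Module.finrank ℝ ↥(⨆ μ ∈ S, Module.End.eigenspace f μ) :=
          ((Module.End.eigenspaces_iSupIndep f).finrank_biSup S).symm
      _ ≤ _ := Submodule.finrank_mono (iSup₂_le fun μ _ => le_iSup _ μ)
end
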